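/- arXiv:2007.13459 — 3 statements merged into one kernel-verified Lean document; each statement's English description precedes it below -/
import Mathlib

section
/- Suppose (u*, d*) = ((u*_0,…,u*_{N−1}), (d*_0,…,d*_{N−1})) with u*_k ∈ U_k and d*_k ∈ D_k for all k is a saddle point (minimizing over the control sequences in ∏_k U_k and maximizing over the disturbance sequences in ∏_k D_k) of the cost J, and let (x*_k)_{k=0}^N be the corresponding state trajectory, i.e., x*_0 = x̄_0 and x*_{k+1} = f_k(x*_k, u*_k, d*_k) for k = 0,…,N−1. Then there exist covectors ξ^0, …, ξ^{N−1} ∈ ℝ^n such that: (adjoint equations) ξ^{k−1} = ∇_x H_k(ξ^k, x*_k, u*_k, d*_k) for k = 1, …, N−1; (transversality) ξ^{N−1} = −∇c_N(x*_N); and (Hamiltonian saddle-point conditions) for each k = 0, …, N−1, ⟨∇_u H_k(ξ^k, x*_k, u*_k, d*_k), ũ⟩ ≤ 0 for every ũ ∈ ℝ^m with u*_k + ũ ∈ U_k, and ⟨∇_d H_k(ξ^k, x*_k, u*_k, d*_k), d̃⟩ ≥ 0 for every d̃ ∈ ℝ^p with d*_k + d̃ ∈ D_k. -/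
/-- The state trajectory generated by dynamics `f` from initial state `x0`
under control sequence `u` and disturbance sequence `d`. -/
noncomputable def traj {n m p : ℕ}
    (f : ℕ → EuclideanSpace ℝ (Fin n) × EuclideanSpace ℝ (Fin m) × EuclideanSpace ℝ (Fin p) →
      EuclideanSpace ℝ (Fin n))
    (x0 : EuclideanSpace ℝ (Fin n))
    (u : ℕ → EuclideanSpace ℝ (Fin m)) (d : ℕ → EuclideanSpace ℝ (Fin p)) :
    ℕ → EuclideanSpace ℝ (Fin n)
  | 0 => x0
  | (k + 1) => f k (traj f x0 u d k, u k, d k)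

/-- The total cost of a control/disturbance sequence pair. -/
noncomputable def costJ {n m p : ℕ} (N : ℕ)
    (f : ℕ → EuclideanSpace ℝ (Fin n) × EuclideanSpace ℝ (Fin m) × EuclideanSpace ℝ (Fin p) →
      EuclideanSpace ℝ (Fin n))
    (c : ℕ → EuclideanSpace ℝ (Fin n) × EuclideanSpace ℝ (Fin m) × EuclideanSpace ℝ (Fin p) → ℝ)
    (cN : EuclideanSpace ℝ (Fin n) → ℝ)
    (x0 : EuclideanSpace ℝ (Fin n))
    (u : ℕ → EuclideanSpace ℝ (Fin m)) (d : ℕ → EuclideanSpace ℝ (Fin p)) : ℝ :=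
  ∑ k ∈ Finset.range N, c k (traj f x0 u d k, u k, d k) + cN (traj f x0 u d N)

section Aux

variable {E F : Type*} [NormedAddCommGroup E] [InnerProductSpace ℝ E] [CompleteSpace E]
  [NormedAddCommGroup F] [InnerProductSpace ℝ F] [CompleteSpace F]

lemma inner_gradient_apply' (h : E → ℝ) (x v : E) :
    (inner ℝ (gradient h x) v : ℝ) = fderiv ℝ h x v := by
  rw [gradient]; exact InnerProductSpace.toDual_symm_apply

lemma my_fderiv_H (A : E → F) (B : E → ℝ) (V : F → ℝ) (e₀ : E)
    (hA : Differentiable ℝ A) (hB : Differentiable ℝ B) (hV : Differentiable ℝ V) :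
    fderiv ℝ (fun e => -B e + (inner ℝ (-gradient V (A e₀)) (A e) : ℝ)) e₀
      = -(fderiv ℝ (fun e => B e + V (A e)) e₀) := by
  have hVA : DifferentiableAt ℝ (fun e => V (A e)) e₀ :=
    (hV (A e₀)).comp e₀ (hA e₀)
  have hinner : DifferentiableAt ℝ (fun e => (inner ℝ (-gradient V (A e₀)) (A e) : ℝ)) e₀ :=
    (differentiableAt_const _).inner ℝ (hA e₀)
  ext v
  rw [fderiv_fun_add (f := fun e => -B e) ((hB e₀).neg) hinner, fderiv_fun_add (hB e₀) hVA]
  have h1 : fderiv ℝ (fun e => -B e) e₀ = -fderiv ℝ B e₀ := fderiv_fun_neg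
  have h2 : fderiv ℝ (fun e => (inner ℝ (-gradient V (A e₀)) (A e) : ℝ)) e₀ v
      = (inner ℝ (-gradient V (A e₀)) (fderiv ℝ A e₀ v) : ℝ) := by
    rw [fderiv_inner_apply (𝕜 := ℝ) (differentiableAt_const _) (hA e₀)]
    simp
  have h3 : fderiv ℝ (fun e => V (A e)) e₀ = (fderiv ℝ V (A e₀)).comp (fderiv ℝ A e₀) :=
    fderiv_comp e₀ (hV (A e₀)) (hA e₀)
  have h4 : (inner ℝ (-gradient V (A e₀)) (fderiv ℝ A e₀ v) : ℝ)
      = -(fderiv ℝ V (A e₀) (fderiv ℝ A e₀ v)) := by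
    rw [inner_neg_left, inner_gradient_apply']
  simp only [ContinuousLinearMap.add_apply, ContinuousLinearMap.neg_apply, h1, h2, h3, h4,
    ContinuousLinearMap.coe_comp', Function.comp_apply]
  ring

lemma my_grad_H (A : E → F) (B : E → ℝ) (V : F → ℝ) (e₀ : E)
    (hA : Differentiable ℝ A) (hB : Differentiable ℝ B) (hV : Differentiable ℝ V) :
    gradient (fun e => -B e + (inner ℝ (-gradient V (A e₀)) (A e) : ℝ)) e₀
      = -gradient (fun e => B e + V (A e)) e₀ := by
  have h := my_fderiv_H A B V e₀ hA hB hV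
  simp only [gradient] at h ⊢
  rw [h, map_neg]

lemma my_inner_H (A : E → F) (B : E → ℝ) (V : F → ℝ) (e₀ v : E)
    (hA : Differentiable ℝ A) (hB : Differentiable ℝ B) (hV : Differentiable ℝ V) :
    (inner ℝ (gradient (fun e => -B e + (inner ℝ (-gradient V (A e₀)) (A e) : ℝ)) e₀) v : ℝ)
      = -(fderiv ℝ (fun e => B e + V (A e)) e₀ v) := by
  rw [inner_gradient_apply', my_fderiv_H A B V e₀ hA hB hV]
  simp

lemma dir_deriv_nonneg (g : E → ℝ) (hg : Differentiable ℝ g) (e₀ v : E)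
    (h : ∀ t : ℝ, 0 ≤ t → t ≤ 1 → g e₀ ≤ g (e₀ + t • v)) :
    0 ≤ fderiv ℝ g e₀ v := by
  have hline : HasDerivAt (fun t : ℝ => e₀ + t • v) v 0 := by
    simpa using ((hasDerivAt_id (0:ℝ)).smul_const v).const_add e₀
  have hφ : HasDerivAt (fun t : ℝ => g (e₀ + t • v)) (fderiv ℝ g e₀ v) 0 := by
    have := (hg (e₀ + (0:ℝ) • v)).hasFDerivAt.comp_hasDerivAt 0 hline
    simpa [Function.comp_def] using this
  have ht : Filter.Tendsto (slope (fun t : ℝ => g (e₀ + t • v)) 0) (nhdsWithin 0 (Set.Ioi 0))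
      (nhds (fderiv ℝ g e₀ v)) :=
    (hasDerivAt_iff_tendsto_slope.mp hφ).mono_left
      (nhdsWithin_mono _ (by intro x hx; exact ne_of_gt hx))
  refine ge_of_tendsto ht ?_
  filter_upwards [Ioc_mem_nhdsGT (by norm_num : (0:ℝ) < 1)] with t ht2
  have h0 : g e₀ ≤ g (e₀ + t • v) := h t ht2.1.le ht2.2
  have : slope (fun t : ℝ => g (e₀ + t • v)) 0 t
      = (g (e₀ + t • v) - g (e₀ + (0:ℝ) • v)) / t := by
    simp [slope_def_field]
  rw [this]
  apply div_nonneg _ ht2.1.le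
  simpa using h0

lemma dir_deriv_nonpos (g : E → ℝ) (hg : Differentiable ℝ g) (e₀ v : E)
    (h : ∀ t : ℝ, 0 ≤ t → t ≤ 1 → g (e₀ + t • v) ≤ g e₀) :
    fderiv ℝ g e₀ v ≤ 0 := by
  have := dir_deriv_nonneg (fun e => -g e) hg.neg e₀ v (fun t h1 h2 => neg_le_neg (h t h1 h2))
  rw [fderiv_fun_neg] at this
  simpa using this

end Aux

section Cost2Go

variable {n m p : ℕ}

/-- Cost-to-go: `cost2go N f c cN u d i` is the cost accumulated over the last `i`
steps (from time `N - i` to `N`), as a function of the state at time `N - i`. -/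
noncomputable def cost2go (N : ℕ)
    (f : ℕ → EuclideanSpace ℝ (Fin n) × EuclideanSpace ℝ (Fin m) × EuclideanSpace ℝ (Fin p) →
      EuclideanSpace ℝ (Fin n))
    (c : ℕ → EuclideanSpace ℝ (Fin n) × EuclideanSpace ℝ (Fin m) × EuclideanSpace ℝ (Fin p) → ℝ)
    (cN : EuclideanSpace ℝ (Fin n) → ℝ)
    (u : ℕ → EuclideanSpace ℝ (Fin m)) (d : ℕ → EuclideanSpace ℝ (Fin p)) :
    ℕ → EuclideanSpace ℝ (Fin n) → ℝ
  | 0 => cN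
  | (i+1) => fun x => c (N - (i+1)) (x, u (N - (i+1)), d (N - (i+1))) +
      cost2go N f c cN u d i (f (N - (i+1)) (x, u (N - (i+1)), d (N - (i+1))))

variable (N : ℕ)
    (f : ℕ → EuclideanSpace ℝ (Fin n) × EuclideanSpace ℝ (Fin m) × EuclideanSpace ℝ (Fin p) →
      EuclideanSpace ℝ (Fin n))
    (c : ℕ → EuclideanSpace ℝ (Fin n) × EuclideanSpace ℝ (Fin m) × EuclideanSpace ℝ (Fin p) → ℝ)
    (cN : EuclideanSpace ℝ (Fin n) → ℝ)
    (x0 : EuclideanSpace ℝ (Fin n))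

lemma cost2go_smooth (hf : ∀ k, ContDiff ℝ (⊤ : ℕ∞) (f k)) (hc : ∀ k, ContDiff ℝ (⊤ : ℕ∞) (c k))
    (hcN : ContDiff ℝ (⊤ : ℕ∞) cN) (u : ℕ → EuclideanSpace ℝ (Fin m))
    (d : ℕ → EuclideanSpace ℝ (Fin p)) : ∀ i, ContDiff ℝ (⊤ : ℕ∞) (cost2go N f c cN u d i) := by
  intro i
  induction i with
  | zero => exact hcN
  | succ i ih =>
    have he : ContDiff ℝ (⊤ : ℕ∞) (fun x : EuclideanSpace ℝ (Fin n) =>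
        ((x, u (N - (i+1)), d (N - (i+1))) : EuclideanSpace ℝ (Fin n) ×
          EuclideanSpace ℝ (Fin m) × EuclideanSpace ℝ (Fin p))) :=
      contDiff_id.prodMk (contDiff_const.prodMk contDiff_const)
    exact ((hc _).comp he).add (ih.comp ((hf _).comp he))

lemma cost2go_congr (u u' : ℕ → EuclideanSpace ℝ (Fin m))
    (d d' : ℕ → EuclideanSpace ℝ (Fin p)) :
    ∀ i, i ≤ N → (∀ l, N - i ≤ l → l < N → u l = u' l) →
      (∀ l, N - i ≤ l → l < N → d l = d' l) →
      cost2go N f c cN u d i = cost2go N f c cN u' d' i := by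
  intro i
  induction i with
  | zero => intro _ _ _; rfl
  | succ i ih =>
    intro hiN hu hd
    have hj : N - (i+1) < N := by omega
    have h1 : u (N - (i+1)) = u' (N - (i+1)) := hu _ le_rfl hj
    have h2 : d (N - (i+1)) = d' (N - (i+1)) := hd _ le_rfl hj
    have h3 := ih (by omega) (fun l hl hlN => hu l (by omega) hlN)
      (fun l hl hlN => hd l (by omega) hlN)
    funext x
    simp only [cost2go, h1, h2, h3]

lemma cost2go_tail (u : ℕ → EuclideanSpace ℝ (Fin m)) (d : ℕ → EuclideanSpace ℝ (Fin p)) :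
    ∀ i, i ≤ N → ∀ T : ℕ → EuclideanSpace ℝ (Fin n),
    (∀ l, N - i ≤ l → l < N → T (l+1) = f l (T l, u l, d l)) →
    (∑ l ∈ Finset.Ico (N - i) N, c l (T l, u l, d l)) + cN (T N)
      = cost2go N f c cN u d i (T (N - i)) := by
  intro i
  induction i with
  | zero => intro _ T _; simp [cost2go]
  | succ i ih =>
    intro hiN T hT
    have hj : N - (i+1) < N := by omega
    have hNi : N - i = N - (i+1) + 1 := by omega
    have hrec := ih (by omega) T (fun l hl hlN => hT l (by omega) hlN)
    rw [Finset.sum_eq_sum_Ico_succ_bot hj, ← hNi, add_assoc, hrec]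
    have hTs : T (N - i) = f (N - (i+1)) (T (N - (i+1)), u (N - (i+1)), d (N - (i+1))) := by
      rw [hNi]; exact hT _ le_rfl hj
    simp only [cost2go, hTs]

lemma traj_step (u : ℕ → EuclideanSpace ℝ (Fin m)) (d : ℕ → EuclideanSpace ℝ (Fin p)) (k : ℕ) :
    traj f x0 u d (k+1) = f k (traj f x0 u d k, u k, d k) := by
  simp [traj]

lemma costJ_split (u : ℕ → EuclideanSpace ℝ (Fin m)) (d : ℕ → EuclideanSpace ℝ (Fin p))
    (k : ℕ) (hk : k < N) :
    costJ N f c cN x0 u d = (∑ l ∈ Finset.range (k+1), c l (traj f x0 u d l, u l, d l))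
      + cost2go N f c cN u d (N - (k+1)) (traj f x0 u d (k+1)) := by
  have h1 : N - (N - (k+1)) = k + 1 := by omega
  have htail := cost2go_tail N f c cN u d (N - (k+1)) (by omega) (traj f x0 u d)
    (fun l _ _ => traj_step f x0 u d l)
  rw [h1] at htail
  unfold costJ
  rw [← htail, Finset.range_eq_Ico,
    ← Finset.sum_Ico_consecutive (fun l => c l (traj f x0 u d l, u l, d l))
      (Nat.zero_le (k+1)) (by omega : k+1 ≤ N), ← Finset.range_eq_Ico]
  ring

lemma traj_congr (u u' : ℕ → EuclideanSpace ℝ (Fin m)) (d d' : ℕ → EuclideanSpace ℝ (Fin p)) :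
    ∀ j, (∀ l, l < j → u l = u' l) → (∀ l, l < j → d l = d' l) →
      traj f x0 u d j = traj f x0 u' d' j := by
  intro j
  induction j with
  | zero => intro _ _; rfl
  | succ j ih =>
    intro hu hd
    simp only [traj]
    rw [ih (fun l hl => hu l (by omega)) (fun l hl => hd l (by omega)),
      hu j (by omega), hd j (by omega)]

end Cost2Go

/-- Discrete-time PMP (saddle-point / min-max version) on Euclidean spaces:
necessary conditions satisfied by a saddle point of the cost. -/
theorem stmt_5 {n m p : ℕ} (N : ℕ) (hN : 1 ≤ N)
    (x0 : EuclideanSpace ℝ (Fin n))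
    (f : ℕ → EuclideanSpace ℝ (Fin n) × EuclideanSpace ℝ (Fin m) × EuclideanSpace ℝ (Fin p) →
      EuclideanSpace ℝ (Fin n))
    (c : ℕ → EuclideanSpace ℝ (Fin n) × EuclideanSpace ℝ (Fin m) × EuclideanSpace ℝ (Fin p) → ℝ)
    (cN : EuclideanSpace ℝ (Fin n) → ℝ)
    (hf : ∀ k, ContDiff ℝ (⊤ : ℕ∞) (f k)) (hc : ∀ k, ContDiff ℝ (⊤ : ℕ∞) (c k)) (hcN : ContDiff ℝ (⊤ : ℕ∞) cN)
    (U : ℕ → Set (EuclideanSpace ℝ (Fin m))) (D : ℕ → Set (EuclideanSpace ℝ (Fin p)))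
    (hUcompact : ∀ k, IsCompact (U k)) (hUconvex : ∀ k, Convex ℝ (U k))
    (hDcompact : ∀ k, IsCompact (D k)) (hDconvex : ∀ k, Convex ℝ (D k))
    (ustar : ℕ → EuclideanSpace ℝ (Fin m)) (dstar : ℕ → EuclideanSpace ℝ (Fin p))
    (hustar : ∀ k < N, ustar k ∈ U k) (hdstar : ∀ k < N, dstar k ∈ D k)
    -- saddle point: minimisation over admissible controls
    (hmin : ∀ u : ℕ → EuclideanSpace ℝ (Fin m), (∀ k < N, u k ∈ U k) →
      costJ N f c cN x0 ustar dstar ≤ costJ N f c cN x0 u dstar)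
    -- saddle point: maximisation over admissible disturbances
    (hmax : ∀ d : ℕ → EuclideanSpace ℝ (Fin p), (∀ k < N, d k ∈ D k) →
      costJ N f c cN x0 ustar d ≤ costJ N f c cN x0 ustar dstar) :
    ∃ ξ : ℕ → EuclideanSpace ℝ (Fin n),
      -- adjoint equations
      (∀ k, 1 ≤ k → k ≤ N - 1 →
        ξ (k - 1) = gradient (fun x => -c k (x, ustar k, dstar k) +
          (inner ℝ (ξ k) (f k (x, ustar k, dstar k)) : ℝ)) (traj f x0 ustar dstar k)) ∧
      -- transversality
      ξ (N - 1) = -gradient cN (traj f x0 ustar dstar N) ∧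
      -- Hamiltonian saddle-point condition: control
      (∀ k < N, ∀ utilde : EuclideanSpace ℝ (Fin m), ustar k + utilde ∈ U k →
        (inner ℝ (gradient (fun u => -c k (traj f x0 ustar dstar k, u, dstar k) +
            (inner ℝ (ξ k) (f k (traj f x0 ustar dstar k, u, dstar k)) : ℝ)) (ustar k))
          utilde : ℝ) ≤ 0) ∧
      -- Hamiltonian saddle-point condition: disturbance
      (∀ k < N, ∀ dtilde : EuclideanSpace ℝ (Fin p), dstar k + dtilde ∈ D k →
        0 ≤ (inner ℝ (gradient (fun d => -c k (traj f x0 ustar dstar k, ustar k, d) +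
            (inner ℝ (ξ k) (f k (traj f x0 ustar dstar k, ustar k, d)) : ℝ)) (dstar k))
          dtilde : ℝ)) := by
  classical
  set xs : ℕ → EuclideanSpace ℝ (Fin n) := traj f x0 ustar dstar with hxsdef
  refine ⟨fun k => -gradient (cost2go N f c cN ustar dstar (N - (k+1))) (xs (k+1)),
    ?_, ?_, ?_, ?_⟩
  · -- adjoint equations
    intro k hk1 hkN
    beta_reduce
    have hk1' : k - 1 + 1 = k := by omega
    have hxk1 : xs (k+1) = f k (xs k, ustar k, dstar k) := traj_step f x0 ustar dstar k
    have hA : Differentiable ℝ (fun x : EuclideanSpace ℝ (Fin n) =>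
        f k (x, ustar k, dstar k)) :=
      ((hf k).comp (contDiff_id.prodMk (contDiff_const.prodMk contDiff_const))).differentiable (by simp)
    have hB : Differentiable ℝ (fun x : EuclideanSpace ℝ (Fin n) =>
        c k (x, ustar k, dstar k)) :=
      ((hc k).comp (contDiff_id.prodMk (contDiff_const.prodMk contDiff_const))).differentiable (by simp)
    have hV : Differentiable ℝ (cost2go N f c cN ustar dstar (N - (k+1))) :=
      (cost2go_smooth N f c cN hf hc hcN ustar dstar _).differentiable (by simp)
    have hg := my_grad_H (fun x => f k (x, ustar k, dstar k))
      (fun x => c k (x, ustar k, dstar k)) (cost2go N f c cN ustar dstar (N - (k+1)))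
      (xs k) hA hB hV
    beta_reduce at hg
    have hfun : (fun x : EuclideanSpace ℝ (Fin n) => c k (x, ustar k, dstar k) +
        cost2go N f c cN ustar dstar (N - (k+1)) (f k (x, ustar k, dstar k)))
        = cost2go N f c cN ustar dstar (N - k) := by
      have h2 : N - k = (N - (k+1)) + 1 := by omega
      have h3 : N - (N - (k+1) + 1) = k := by omega
      rw [h2]
      funext x
      simp only [cost2go, h3]
    rw [hfun] at hg
    rw [hk1', hxk1]
    exact hg.symm
  · -- transversality
    beta_reduce
    have hN1 : N - 1 + 1 = N := by omega
    rw [hN1]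
    have : N - N = 0 := by omega
    rw [this]
    rfl
  · -- control condition
    intro k hk utilde hu
    beta_reduce
    have hxk1 : xs (k+1) = f k (xs k, ustar k, dstar k) := traj_step f x0 ustar dstar k
    have hemb : ContDiff ℝ (⊤ : ℕ∞) (fun w : EuclideanSpace ℝ (Fin m) =>
        ((xs k, w, dstar k) : EuclideanSpace ℝ (Fin n) ×
          EuclideanSpace ℝ (Fin m) × EuclideanSpace ℝ (Fin p))) :=
      contDiff_const.prodMk (contDiff_id.prodMk contDiff_const)
    have hA : Differentiable ℝ (fun w : EuclideanSpace ℝ (Fin m) =>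
        f k (xs k, w, dstar k)) := ((hf k).comp hemb).differentiable (by simp)
    have hB : Differentiable ℝ (fun w : EuclideanSpace ℝ (Fin m) =>
        c k (xs k, w, dstar k)) := ((hc k).comp hemb).differentiable (by simp)
    have hV : Differentiable ℝ (cost2go N f c cN ustar dstar (N - (k+1))) :=
      (cost2go_smooth N f c cN hf hc hcN ustar dstar _).differentiable (by simp)
    have hIH := my_inner_H (fun w => f k (xs k, w, dstar k))
      (fun w => c k (xs k, w, dstar k)) (cost2go N f c cN ustar dstar (N - (k+1)))
      (ustar k) utilde hA hB hV
    beta_reduce at hIH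
    rw [hxk1, hIH]
    -- suffices to show the directional derivative of the cost-to-go in u is nonneg
    have hgdiff : Differentiable ℝ (fun w : EuclideanSpace ℝ (Fin m) =>
        c k (xs k, w, dstar k) +
          cost2go N f c cN ustar dstar (N - (k+1)) (f k (xs k, w, dstar k))) :=
      fun w => (hB w).add ((hV _).comp w (hA w))
    have hkey : ∀ w ∈ U k, c k (xs k, ustar k, dstar k) +
        cost2go N f c cN ustar dstar (N - (k+1)) (f k (xs k, ustar k, dstar k)) ≤
        c k (xs k, w, dstar k) +
          cost2go N f c cN ustar dstar (N - (k+1)) (f k (xs k, w, dstar k)) := by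
      intro w hw
      set u' : ℕ → EuclideanSpace ℝ (Fin m) := Function.update ustar k w with hu'def
      have hu'k : u' k = w := Function.update_self k w ustar
      have hu'ne : ∀ l, l ≠ k → u' l = ustar l := fun l hl => Function.update_of_ne hl w ustar
      have hadm : ∀ l < N, u' l ∈ U l := by
        intro l hl
        by_cases hlk : l = k
        · subst hlk; rw [hu'k]; exact hw
        · rw [hu'ne l hlk]; exact hustar l hl
      have h0 := hmin u' hadm
      rw [costJ_split N f c cN x0 u' dstar k hk, costJ_split N f c cN x0 ustar dstar k hk] at h0
      have htraj : ∀ l, l ≤ k → traj f x0 u' dstar l = xs l := by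
        intro l hl
        exact traj_congr f x0 u' ustar dstar dstar l
          (fun i hi => hu'ne i (by omega)) (fun _ _ => rfl)
      have hc2 : cost2go N f c cN u' dstar (N - (k+1)) =
          cost2go N f c cN ustar dstar (N - (k+1)) :=
        cost2go_congr N f c cN u' ustar dstar dstar (N - (k+1)) (by omega)
          (fun l hl hlN => hu'ne l (by omega)) (fun _ _ _ => rfl)
      have htrk1 : traj f x0 u' dstar (k+1) = f k (xs k, w, dstar k) := by
        rw [traj_step f x0 u' dstar k, htraj k le_rfl, hu'k]
      have hsum : ∑ l ∈ Finset.range (k+1), c l (traj f x0 u' dstar l, u' l, dstar l)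
          = (∑ l ∈ Finset.range k, c l (xs l, ustar l, dstar l))
            + c k (xs k, w, dstar k) := by
        rw [Finset.sum_range_succ, htraj k le_rfl, hu'k]
        congr 1
        refine Finset.sum_congr rfl fun l hl => ?_
        have hl' : l < k := Finset.mem_range.mp hl
        rw [htraj l hl'.le, hu'ne l (by omega)]
      have hsum' : ∑ l ∈ Finset.range (k+1),
          c l (traj f x0 ustar dstar l, ustar l, dstar l)
          = (∑ l ∈ Finset.range k, c l (xs l, ustar l, dstar l))
            + c k (xs k, ustar k, dstar k) := by
        rw [Finset.sum_range_succ]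
      rw [hsum, hc2, htrk1, hsum', ← hxsdef, hxk1] at h0
      linarith
    have hdd : 0 ≤ fderiv ℝ (fun w : EuclideanSpace ℝ (Fin m) =>
        c k (xs k, w, dstar k) +
          cost2go N f c cN ustar dstar (N - (k+1)) (f k (xs k, w, dstar k)))
        (ustar k) utilde := by
      apply dir_deriv_nonneg _ hgdiff
      intro t ht0 ht1
      apply hkey
      have hmem := hUconvex k (hustar k hk) hu (by linarith : (0:ℝ) ≤ 1 - t) ht0 (by ring)
      have heq : (1 - t) • ustar k + t • (ustar k + utilde) = ustar k + t • utilde := by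
        rw [smul_add, sub_smul, one_smul]; abel
      rwa [heq] at hmem
    linarith
  · -- disturbance condition
    intro k hk dtilde hd
    beta_reduce
    have hxk1 : xs (k+1) = f k (xs k, ustar k, dstar k) := traj_step f x0 ustar dstar k
    have hemb : ContDiff ℝ (⊤ : ℕ∞) (fun w : EuclideanSpace ℝ (Fin p) =>
        ((xs k, ustar k, w) : EuclideanSpace ℝ (Fin n) ×
          EuclideanSpace ℝ (Fin m) × EuclideanSpace ℝ (Fin p))) :=
      contDiff_const.prodMk (contDiff_const.prodMk contDiff_id)
    have hA : Differentiable ℝ (fun w : EuclideanSpace ℝ (Fin p) =>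
        f k (xs k, ustar k, w)) := ((hf k).comp hemb).differentiable (by simp)
    have hB : Differentiable ℝ (fun w : EuclideanSpace ℝ (Fin p) =>
        c k (xs k, ustar k, w)) := ((hc k).comp hemb).differentiable (by simp)
    have hV : Differentiable ℝ (cost2go N f c cN ustar dstar (N - (k+1))) :=
      (cost2go_smooth N f c cN hf hc hcN ustar dstar _).differentiable (by simp)
    have hIH := my_inner_H (fun w => f k (xs k, ustar k, w))
      (fun w => c k (xs k, ustar k, w)) (cost2go N f c cN ustar dstar (N - (k+1)))
      (dstar k) dtilde hA hB hV
    beta_reduce at hIH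
    rw [hxk1, hIH]
    have hgdiff : Differentiable ℝ (fun w : EuclideanSpace ℝ (Fin p) =>
        c k (xs k, ustar k, w) +
          cost2go N f c cN ustar dstar (N - (k+1)) (f k (xs k, ustar k, w))) :=
      fun w => (hB w).add ((hV _).comp w (hA w))
    have hkey : ∀ w ∈ D k, c k (xs k, ustar k, w) +
        cost2go N f c cN ustar dstar (N - (k+1)) (f k (xs k, ustar k, w)) ≤
        c k (xs k, ustar k, dstar k) +
          cost2go N f c cN ustar dstar (N - (k+1)) (f k (xs k, ustar k, dstar k)) := by
      intro w hw
      set d' : ℕ → EuclideanSpace ℝ (Fin p) := Function.update dstar k w with hd'def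
      have hd'k : d' k = w := Function.update_self k w dstar
      have hd'ne : ∀ l, l ≠ k → d' l = dstar l := fun l hl => Function.update_of_ne hl w dstar
      have hadm : ∀ l < N, d' l ∈ D l := by
        intro l hl
        by_cases hlk : l = k
        · subst hlk; rw [hd'k]; exact hw
        · rw [hd'ne l hlk]; exact hdstar l hl
      have h0 := hmax d' hadm
      rw [costJ_split N f c cN x0 ustar d' k hk, costJ_split N f c cN x0 ustar dstar k hk] at h0
      have htraj : ∀ l, l ≤ k → traj f x0 ustar d' l = xs l := by
        intro l hl
        exact traj_congr f x0 ustar ustar d' dstar l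
          (fun _ _ => rfl) (fun i hi => hd'ne i (by omega))
      have hc2 : cost2go N f c cN ustar d' (N - (k+1)) =
          cost2go N f c cN ustar dstar (N - (k+1)) :=
        cost2go_congr N f c cN ustar ustar d' dstar (N - (k+1)) (by omega)
          (fun _ _ _ => rfl) (fun l hl hlN => hd'ne l (by omega))
      have htrk1 : traj f x0 ustar d' (k+1) = f k (xs k, ustar k, w) := by
        rw [traj_step f x0 ustar d' k, htraj k le_rfl, hd'k]
      have hsum : ∑ l ∈ Finset.range (k+1), c l (traj f x0 ustar d' l, ustar l, d' l)
          = (∑ l ∈ Finset.range k, c l (xs l, ustar l, dstar l))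
            + c k (xs k, ustar k, w) := by
        rw [Finset.sum_range_succ, htraj k le_rfl, hd'k]
        congr 1
        refine Finset.sum_congr rfl fun l hl => ?_
        have hl' : l < k := Finset.mem_range.mp hl
        rw [htraj l hl'.le, hd'ne l (by omega)]
      have hsum' : ∑ l ∈ Finset.range (k+1),
          c l (traj f x0 ustar dstar l, ustar l, dstar l)
          = (∑ l ∈ Finset.range k, c l (xs l, ustar l, dstar l))
            + c k (xs k, ustar k, dstar k) := by
        rw [Finset.sum_range_succ]
      rw [hsum, hc2, htrk1, hsum', ← hxsdef, hxk1] at h0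
      linarith
    have hdd : fderiv ℝ (fun w : EuclideanSpace ℝ (Fin p) =>
        c k (xs k, ustar k, w) +
          cost2go N f c cN ustar dstar (N - (k+1)) (f k (xs k, ustar k, w)))
        (dstar k) dtilde ≤ 0 := by
      apply dir_deriv_nonpos _ hgdiff
      intro t ht0 ht1
      apply hkey
      have hmem := hDconvex k (hdstar k hk) hd (by linarith : (0:ℝ) ≤ 1 - t) ht0 (by ring)
      have heq : (1 - t) • dstar k + t • (dstar k + dtilde) = dstar k + t • dtilde := by
        rw [smul_add, sub_smul, one_smul]; abel
      rwa [heq] at hmem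
    linarith
end

section
/- Fix the disturbance sequence at (d*_k)_{k=0}^{N−1} and suppose the control sequence (u*_k)_{k=0}^{N−1} with u*_k ∈ U_k minimizes the cost J(·, d*) over ∏_k U_k, with corresponding state trajectory (x*_k)_{k=0}^N (x*_0 = x̄_0 and x*_{k+1} = f_k(x*_k, u*_k, d*_k)). Then there exist a scalar ν ≤ 0 and covectors ξ^0, …, ξ^{N−1} ∈ ℝ^n, not all zero when ν = 0, such that, with H^ν_k(ξ, x, u) := ν·c_k(x, u, d*_k) + ⟨ξ, f_k(x, u, d*_k)⟩: (adjoint equations) ξ^{k−1} = ∇_x H^ν_k(ξ^k, x*_k, u*_k) for k = 1, …, N−1; (transversality) ξ^{N−1} = ν·∇c_N(x*_N); and (Hamiltonian non-positive gradient condition) for each k = 0, …, N−1, ⟨∇_u H^ν_k(ξ^k, x*_k, u*_k), ũ⟩ ≤ 0 for every ũ ∈ ℝ^m with u*_k + ũ ∈ U_k. -/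
open InnerProductSpace

lemma inner_gradient_eq {E : Type*} [NormedAddCommGroup E] [InnerProductSpace ℝ E]
    [CompleteSpace E] {G : E → ℝ} {L : E →L[ℝ] ℝ} {x : E} (h : HasFDerivAt G L x) (v : E) :
    (inner ℝ (gradient G x) v : ℝ) = L v := by
  rw [gradient, h.fderiv]; exact InnerProductSpace.toDual_symm_apply

section slices
variable {E F G H : Type*} [NormedAddCommGroup E] [NormedSpace ℝ E]
  [NormedAddCommGroup F] [NormedSpace ℝ F] [NormedAddCommGroup G] [NormedSpace ℝ G]
  [NormedAddCommGroup H] [NormedSpace ℝ H]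

lemma slice1 (φ : E × F × G → H) (hφ : Differentiable ℝ φ) (x : E) (u : F) (d : G) :
    HasFDerivAt (fun x' => φ (x', u, d))
      ((fderiv ℝ φ (x, u, d)).comp ((ContinuousLinearMap.id ℝ E).prod 0)) x :=
  ((hφ (x, u, d)).hasFDerivAt).comp x
    (HasFDerivAt.prodMk (hasFDerivAt_id x) (hasFDerivAt_const (u, d) x))

lemma slice2 (φ : E × F × G → H) (hφ : Differentiable ℝ φ) (x : E) (u : F) (d : G) :
    HasFDerivAt (fun u' => φ (x, u', d))
      ((fderiv ℝ φ (x, u, d)).comp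
        ((0 : F →L[ℝ] E).prod ((ContinuousLinearMap.id ℝ F).prod 0))) u :=
  ((hφ (x, u, d)).hasFDerivAt).comp u
    (HasFDerivAt.prodMk (hasFDerivAt_const x u) (HasFDerivAt.prodMk (hasFDerivAt_id u) (hasFDerivAt_const d u)))
end slices

lemma ham_fderiv {E H : Type*} [NormedAddCommGroup E] [NormedSpace ℝ E]
    [NormedAddCommGroup H] [InnerProductSpace ℝ H]
    {C : E → ℝ} {Fm : E → H} {LC : E →L[ℝ] ℝ} {LF : E →L[ℝ] H} {x : E}
    (ξ : H) (hC : HasFDerivAt C LC x) (hF : HasFDerivAt Fm LF x) :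
    HasFDerivAt (fun y => (-1 : ℝ) * C y + (inner ℝ ξ (Fm y) : ℝ))
      ((-1 : ℝ) • LC + (innerSL ℝ ξ).comp LF) x := by
  have h2 : HasFDerivAt (fun y => (inner ℝ ξ (Fm y) : ℝ)) ((innerSL ℝ ξ).comp LF) x :=
    ((innerSL ℝ ξ).hasFDerivAt).comp x hF
  exact (hC.const_mul (-1)).add h2

section aux
variable {n m p : ℕ}
  (f : ℕ → EuclideanSpace ℝ (Fin n) × EuclideanSpace ℝ (Fin m) × EuclideanSpace ℝ (Fin p) →
      EuclideanSpace ℝ (Fin n))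
  (c : ℕ → EuclideanSpace ℝ (Fin n) × EuclideanSpace ℝ (Fin m) × EuclideanSpace ℝ (Fin p) → ℝ)
  (cN : EuclideanSpace ℝ (Fin n) → ℝ)
  (x0 : EuclideanSpace ℝ (Fin n))
  (ustar : ℕ → EuclideanSpace ℝ (Fin m)) (dstar : ℕ → EuclideanSpace ℝ (Fin p))

noncomputable def gAux (k : ℕ) (xi : EuclideanSpace ℝ (Fin n)) : EuclideanSpace ℝ (Fin n) :=
  gradient (fun x => (-1 : ℝ) * c k (x, ustar k, dstar k) +
    (inner ℝ xi (f k (x, ustar k, dstar k)) : ℝ)) (traj f x0 ustar dstar k)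

noncomputable def backAux (N : ℕ) : ℕ → EuclideanSpace ℝ (Fin n)
  | 0 => (-1 : ℝ) • gradient cN (traj f x0 ustar dstar N)
  | (i + 1) => gAux f c x0 ustar dstar (N - 1 - i) (backAux N i)

noncomputable def vAux (w : ℕ → EuclideanSpace ℝ (Fin m)) : ℕ → EuclideanSpace ℝ (Fin n)
  | 0 => 0
  | (i + 1) => fderiv ℝ (f i) (traj f x0 ustar dstar i, ustar i, dstar i)
      (vAux w i, w i, 0)

lemma inner_gAux (hf : ∀ k, ContDiff ℝ (⊤ : ℕ∞) (f k)) (hc : ∀ k, ContDiff ℝ (⊤ : ℕ∞) (c k))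
    (k : ℕ) (xi v : EuclideanSpace ℝ (Fin n)) :
    (inner ℝ (gAux f c x0 ustar dstar k xi) v : ℝ) =
      -1 * fderiv ℝ (c k) (traj f x0 ustar dstar k, ustar k, dstar k) (v, 0, 0)
      + (inner ℝ xi (fderiv ℝ (f k) (traj f x0 ustar dstar k, ustar k, dstar k) (v, 0, 0)) : ℝ) := by
  have hC := slice1 (c k) ((hc k).differentiable (by simp)) (traj f x0 ustar dstar k)
    (ustar k) (dstar k)
  have hF := slice1 (f k) ((hf k).differentiable (by simp)) (traj f x0 ustar dstar k)
    (ustar k) (dstar k)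
  have hG := ham_fderiv xi hC hF
  rw [gAux, inner_gradient_eq hG]
  simp only [ContinuousLinearMap.add_apply, ContinuousLinearMap.smul_apply,
    ContinuousLinearMap.coe_comp', Function.comp_apply, ContinuousLinearMap.prod_apply,
    ContinuousLinearMap.coe_id', id_eq, ContinuousLinearMap.zero_apply, innerSL_apply_apply,
    smul_eq_mul, Prod.mk_zero_zero]
end aux

/-- Discrete-time PMP for the minimisation problem with the disturbance frozen
at `dstar`: necessary conditions for a minimising control sequence. -/
theorem stmt_6 {n m p : ℕ} (N : ℕ) (hN : 1 ≤ N)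
    (x0 : EuclideanSpace ℝ (Fin n))
    (f : ℕ → EuclideanSpace ℝ (Fin n) × EuclideanSpace ℝ (Fin m) × EuclideanSpace ℝ (Fin p) →
      EuclideanSpace ℝ (Fin n))
    (c : ℕ → EuclideanSpace ℝ (Fin n) × EuclideanSpace ℝ (Fin m) × EuclideanSpace ℝ (Fin p) → ℝ)
    (cN : EuclideanSpace ℝ (Fin n) → ℝ)
    (hf : ∀ k, ContDiff ℝ (⊤ : ℕ∞) (f k)) (hc : ∀ k, ContDiff ℝ (⊤ : ℕ∞) (c k)) (hcN : ContDiff ℝ (⊤ : ℕ∞) cN)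
    (U : ℕ → Set (EuclideanSpace ℝ (Fin m)))
    (hUcompact : ∀ k, IsCompact (U k)) (hUconvex : ∀ k, Convex ℝ (U k))
    (ustar : ℕ → EuclideanSpace ℝ (Fin m)) (dstar : ℕ → EuclideanSpace ℝ (Fin p))
    (hustar : ∀ k < N, ustar k ∈ U k)
    -- minimisation over admissible controls, disturbance frozen at `dstar`
    (hmin : ∀ u : ℕ → EuclideanSpace ℝ (Fin m), (∀ k < N, u k ∈ U k) →
      costJ N f c cN x0 ustar dstar ≤ costJ N f c cN x0 u dstar) :
    ∃ ν : ℝ, ∃ ξ : ℕ → EuclideanSpace ℝ (Fin n),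
      -- non-triviality
      ν ≤ 0 ∧ (ν = 0 → ∃ k < N, ξ k ≠ 0) ∧
      -- adjoint equations
      (∀ k, 1 ≤ k → k ≤ N - 1 →
        ξ (k - 1) = gradient (fun x => ν * c k (x, ustar k, dstar k) +
          (inner ℝ (ξ k) (f k (x, ustar k, dstar k)) : ℝ)) (traj f x0 ustar dstar k)) ∧
      -- transversality
      ξ (N - 1) = ν • gradient cN (traj f x0 ustar dstar N) ∧
      -- Hamiltonian non-positive gradient condition
      (∀ k < N, ∀ utilde : EuclideanSpace ℝ (Fin m), ustar k + utilde ∈ U k →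
        (inner ℝ (gradient (fun u => ν * c k (traj f x0 ustar dstar k, u, dstar k) +
            (inner ℝ (ξ k) (f k (traj f x0 ustar dstar k, u, dstar k)) : ℝ)) (ustar k))
          utilde : ℝ) ≤ 0) := by
  classical
  set ξ : ℕ → EuclideanSpace ℝ (Fin n) :=
    fun k => backAux f c cN x0 ustar dstar N (N - 1 - k) with hξdef
  have hadj : ∀ kk, 1 ≤ kk → kk ≤ N - 1 →
      ξ (kk - 1) = gAux f c x0 ustar dstar kk (ξ kk) := by
    intro kk h1 h2
    have e1 : N - 1 - (kk - 1) = (N - 1 - kk) + 1 := by omega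
    have e2 : N - 1 - (N - 1 - kk) = kk := by omega
    show backAux f c cN x0 ustar dstar N (N - 1 - (kk - 1)) = _
    rw [e1, backAux, e2]
  have htrans : ξ (N - 1) = (-1 : ℝ) • gradient cN (traj f x0 ustar dstar N) := by
    show backAux f c cN x0 ustar dstar N (N - 1 - (N - 1)) = _
    rw [Nat.sub_self, backAux]
  refine ⟨-1, ξ, by norm_num, fun h => absurd h (by norm_num), ?_, htrans, ?_⟩
  · intro k h1 h2
    rw [hadj k h1 h2, gAux]
  -- Hamiltonian condition
  intro k hk utilde hfeasu
  set ut : ℝ → ℕ → EuclideanSpace ℝ (Fin m) :=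
    fun t => Function.update ustar k (ustar k + t • utilde) with hutdef
  have hut0 : ut 0 = ustar := by
    funext j
    by_cases h : j = k
    · subst h; simp [ut]
    · simp [ut, Function.update_of_ne h]
  set w : ℕ → EuclideanSpace ℝ (Fin m) := fun j => if j = k then utilde else 0 with hwdef
  have huderiv : ∀ j, HasDerivAt (fun t => ut t j) (w j) 0 := by
    intro j
    by_cases h : j = k
    · subst h
      have h1 : HasDerivAt (fun t : ℝ => ustar j + t • utilde) utilde 0 := by
        have h2 : HasDerivAt (fun t : ℝ => t • utilde) ((1 : ℝ) • utilde) 0 :=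
          (hasDerivAt_id 0).smul_const utilde
        simpa using h2.const_add (ustar j)
      simpa [ut, w] using h1
    · simpa [ut, w, h, Function.update_of_ne h] using
        hasDerivAt_const (0 : ℝ) (ustar j)
  set v : ℕ → EuclideanSpace ℝ (Fin n) := vAux f x0 ustar dstar w with hvdef
  have hXd : ∀ j, HasDerivAt (fun t => traj f x0 (ut t) dstar j) (v j) 0 := by
    intro j
    induction j with
    | zero => exact hasDerivAt_const _ _
    | succ j ih =>
      have hcurve : HasDerivAt (fun t => (traj f x0 (ut t) dstar j, ut t j, dstar j))
          (v j, w j, 0) 0 := HasDerivAt.prodMk ih (HasDerivAt.prodMk (huderiv j) (hasDerivAt_const _ _))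
      have hfj := (((hf j).differentiable (by simp))
        (traj f x0 (ut 0) dstar j, ut 0 j, dstar j)).hasFDerivAt
      have h2 := hfj.comp_hasDerivAt 0 hcurve
      rw [hut0] at h2
      exact h2
  have hterm : ∀ j, HasDerivAt (fun t => c j (traj f x0 (ut t) dstar j, ut t j, dstar j))
      (fderiv ℝ (c j) (traj f x0 ustar dstar j, ustar j, dstar j) (v j, w j, 0)) 0 := by
    intro j
    have hcurve : HasDerivAt (fun t => (traj f x0 (ut t) dstar j, ut t j, dstar j))
        (v j, w j, 0) 0 := HasDerivAt.prodMk (hXd j) (HasDerivAt.prodMk (huderiv j) (hasDerivAt_const _ _))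
    have hcj := (((hc j).differentiable (by simp))
      (traj f x0 (ut 0) dstar j, ut 0 j, dstar j)).hasFDerivAt
    have h2 := hcj.comp_hasDerivAt 0 hcurve
    rw [hut0] at h2
    exact h2
  have htermN : HasDerivAt (fun t => cN (traj f x0 (ut t) dstar N))
      (fderiv ℝ cN (traj f x0 ustar dstar N) (v N)) 0 := by
    have hcn := ((hcN.differentiable (by simp)) (traj f x0 (ut 0) dstar N)).hasFDerivAt
    have h2 := hcn.comp_hasDerivAt 0 (hXd N)
    rw [hut0] at h2
    exact h2
  set D : ℝ := (∑ j ∈ Finset.range N,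
      fderiv ℝ (c j) (traj f x0 ustar dstar j, ustar j, dstar j) (v j, w j, 0))
    + fderiv ℝ cN (traj f x0 ustar dstar N) (v N) with hDdef
  have hφ : HasDerivAt (fun t => costJ N f c cN x0 (ut t) dstar) D 0 :=
    (HasDerivAt.fun_sum (fun j _ => hterm j)).add htermN
  have hDpos : 0 ≤ D := by
    have hfeast : ∀ t ∈ Set.Ioc (0 : ℝ) 1, ∀ j, j < N → ut t j ∈ U j := by
      intro t ht j hj
      by_cases h : j = k
      · subst h
        have hmem := hUconvex j (hustar j hj) hfeasu
          (sub_nonneg.mpr ht.2) ht.1.le (by ring)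
        have heq : ut t j = (1 - t) • ustar j + t • (ustar j + utilde) := by
          simp only [ut, Function.update_self]
          module
        rw [heq]; exact hmem
      · simpa [ut, Function.update_of_ne h] using hustar j hj
    have htend : Filter.Tendsto (slope (fun t => costJ N f c cN x0 (ut t) dstar) 0)
        (nhdsWithin 0 (Set.Ioi 0)) (nhds D) :=
      (hasDerivAt_iff_tendsto_slope.mp hφ).mono_left
        (nhdsWithin_mono 0 (fun x hx => Set.mem_compl_singleton_iff.mpr (ne_of_gt hx)))
    refine ge_of_tendsto htend ?_
    filter_upwards [Ioc_mem_nhdsGT_of_mem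
      (Set.mem_Ico.mpr ⟨le_refl (0 : ℝ), zero_lt_one⟩)] with t ht
    rw [slope_def_field]
    have h0 : costJ N f c cN x0 (ut 0) dstar = costJ N f c cN x0 ustar dstar := by
      rw [hut0]
    have hnn : 0 ≤ costJ N f c cN x0 (ut t) dstar - costJ N f c cN x0 (ut 0) dstar := by
      rw [h0]
      have := hmin (ut t) (hfeast t ht)
      linarith
    have ht' : (0 : ℝ) ≤ t - 0 := by simpa using ht.1.le
    exact div_nonneg hnn ht'
  set S : ℕ → ℝ := fun j => (∑ i ∈ Finset.Ico j N,
      fderiv ℝ (c i) (traj f x0 ustar dstar i, ustar i, dstar i) (v i, w i, 0))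
    + fderiv ℝ cN (traj f x0 ustar dstar N) (v N) with hSdef
  have hv_zero : ∀ j, j ≤ k → v j = 0 := by
    intro j
    induction j with
    | zero => intro _; rfl
    | succ i ih =>
      intro hik
      have h1 : v (i + 1) = fderiv ℝ (f i) (traj f x0 ustar dstar i, ustar i, dstar i)
          (v i, w i, 0) := rfl
      have hwi : w i = 0 := by simp only [w]; rw [if_neg (by omega)]
      rw [h1, ih (by omega), hwi]
      simp [Prod.mk_zero_zero]
  have hclaim : ∀ r, r ≤ N - 1 - k →
      S (N - r) = -(inner ℝ (ξ (N - r - 1)) (v (N - r)) : ℝ) := by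
    intro r
    induction r with
    | zero =>
      intro _
      have hSN : S N = fderiv ℝ cN (traj f x0 ustar dstar N) (v N) := by
        simp [S]
      have hgrad : (inner ℝ (gradient cN (traj f x0 ustar dstar N)) (v N) : ℝ)
          = fderiv ℝ cN (traj f x0 ustar dstar N) (v N) :=
        inner_gradient_eq ((hcN.differentiable (by simp) _).hasFDerivAt) (v N)
      rw [Nat.sub_zero, hSN, htrans, real_inner_smul_left, hgrad]
      ring
    | succ r ih =>
      intro hr
      have e1 : N - r = (N - (r + 1)) + 1 := by omega
      set i := N - (r + 1) with hidef
      have hi1 : 1 ≤ i := by omega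
      have hi2 : i ≤ N - 1 := by omega
      have hik : k < i := by omega
      have hiN : i < N := by omega
      have hIH := ih (by omega)
      rw [e1] at hIH
      simp only [Nat.add_sub_cancel] at hIH
      have hsplit : S i = fderiv ℝ (c i) (traj f x0 ustar dstar i, ustar i, dstar i)
          (v i, w i, 0) + S (i + 1) := by
        simp only [S]
        rw [Finset.sum_eq_sum_Ico_succ_bot hiN]
        ring
      have hwi : w i = 0 := by simp only [w]; rw [if_neg (by omega)]
      have hvs : v (i + 1) = fderiv ℝ (f i) (traj f x0 ustar dstar i, ustar i, dstar i)
          (v i, 0, 0) := by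
        show vAux f x0 ustar dstar w (i + 1) = _
        rw [vAux, hwi]
      have hxi : ξ (i - 1) = gAux f c x0 ustar dstar i (ξ i) := hadj i hi1 hi2
      have hpair : (inner ℝ (ξ (i - 1)) (v i) : ℝ) =
          -1 * fderiv ℝ (c i) (traj f x0 ustar dstar i, ustar i, dstar i) (v i, 0, 0)
          + (inner ℝ (ξ i) (fderiv ℝ (f i)
              (traj f x0 ustar dstar i, ustar i, dstar i) (v i, 0, 0)) : ℝ) := by
        rw [hxi]
        exact inner_gAux f c x0 ustar dstar hf hc i (ξ i) (v i)
      have hvv : (inner ℝ (ξ i) (v (i + 1)) : ℝ) = (inner ℝ (ξ i) (fderiv ℝ (f i)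
          (traj f x0 ustar dstar i, ustar i, dstar i) (v i, 0, 0)) : ℝ) := by rw [hvs]
      rw [hsplit, hwi, hIH]
      rw [hvv]
      linarith [hpair]
  -- final assembly
  have hclaimk : S (k + 1) = -(inner ℝ (ξ k) (v (k + 1)) : ℝ) := by
    have h1 := hclaim (N - 1 - k) (le_refl _)
    have e : N - (N - 1 - k) = k + 1 := by omega
    rw [e] at h1
    simpa using h1
  have hS0 : D = S 0 := by
    simp only [D, S, Finset.range_eq_Ico]
  have hS0k : S 0 = S k := by
    simp only [S]
    rw [← Finset.sum_Ico_consecutive _ (Nat.zero_le k) (le_of_lt hk)]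
    have hzero : ∀ i ∈ Finset.Ico 0 k,
        fderiv ℝ (c i) (traj f x0 ustar dstar i, ustar i, dstar i) (v i, w i, 0) = 0 := by
      intro i hi
      have hik : i < k := (Finset.mem_Ico.mp hi).2
      have hwi : w i = 0 := by simp only [w]; rw [if_neg (by omega)]
      rw [hv_zero i (by omega), hwi]
      simp [Prod.mk_zero_zero]
    rw [Finset.sum_eq_zero hzero]
    ring
  have hSk : S k = fderiv ℝ (c k) (traj f x0 ustar dstar k, ustar k, dstar k)
      (v k, w k, 0) + S (k + 1) := by
    simp only [S]
    rw [Finset.sum_eq_sum_Ico_succ_bot hk]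
    ring
  have hwk : w k = utilde := by simp [w]
  have hvk : v k = 0 := hv_zero k le_rfl
  -- pairing for the u-gradient
  have hCu := slice2 (c k) ((hc k).differentiable (by simp)) (traj f x0 ustar dstar k)
    (ustar k) (dstar k)
  have hFu := slice2 (f k) ((hf k).differentiable (by simp)) (traj f x0 ustar dstar k)
    (ustar k) (dstar k)
  have hGu := ham_fderiv (ξ k) hCu hFu
  have hpairu : (inner ℝ (gradient (fun u => (-1 : ℝ) * c k (traj f x0 ustar dstar k, u, dstar k) +
        (inner ℝ (ξ k) (f k (traj f x0 ustar dstar k, u, dstar k)) : ℝ)) (ustar k)) utilde : ℝ)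
      = -1 * fderiv ℝ (c k) (traj f x0 ustar dstar k, ustar k, dstar k) (0, utilde, 0)
        + (inner ℝ (ξ k) (fderiv ℝ (f k)
            (traj f x0 ustar dstar k, ustar k, dstar k) (0, utilde, 0)) : ℝ) := by
    rw [inner_gradient_eq hGu]
    simp only [ContinuousLinearMap.add_apply, ContinuousLinearMap.smul_apply,
      ContinuousLinearMap.coe_comp', Function.comp_apply, ContinuousLinearMap.prod_apply,
      ContinuousLinearMap.coe_id', id_eq, ContinuousLinearMap.zero_apply, innerSL_apply_apply,
      smul_eq_mul, Prod.mk_zero_zero]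
  have hvk1 : v (k + 1) = fderiv ℝ (f k) (traj f x0 ustar dstar k, ustar k, dstar k)
      (0, utilde, 0) := by
    show vAux f x0 ustar dstar w (k + 1) = _
    have hvk' : vAux f x0 ustar dstar w k = 0 := hvk
    rw [vAux, hwk, hvk']
  have hck0 : fderiv ℝ (c k) (traj f x0 ustar dstar k, ustar k, dstar k) (v k, w k, 0)
      = fderiv ℝ (c k) (traj f x0 ustar dstar k, ustar k, dstar k) (0, utilde, 0) := by
    rw [hvk, hwk]
  rw [hpairu]
  have hvv : (inner ℝ (ξ k) (fderiv ℝ (f k)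
      (traj f x0 ustar dstar k, ustar k, dstar k) (0, utilde, 0)) : ℝ)
      = (inner ℝ (ξ k) (v (k + 1)) : ℝ) := by rw [hvk1]
  rw [hvv]
  have hDeq : D = fderiv ℝ (c k) (traj f x0 ustar dstar k, ustar k, dstar k) (0, utilde, 0)
      + S (k + 1) := by rw [hS0, hS0k, hSk, hck0]
  linarith [hDpos, hclaimk, hDeq]
end

section
/- Let N ≥ 1 be an integer and h, Λ, μ ∈ ℝ with μ ≠ 0. Define real sequences (M_k)_{k=0}^{N} and (L_k)_{k=0}^{N−1} backward by M_N = Λ², and for k = N−1, …, 0: L_k := 1 + h²·M_{k+1}·(1 − μ^{−2}) and M_k := Λ² + M_{k+1}·L_k^{−1}; assume L_k ≠ 0 for every k ∈ {0, …, N−1}. Given v_0 ∈ ℝ, define v_{k+1} := L_k^{−1}·v_k for k = 0, …, N−1. Then for every k ∈ {0, …, N−1}, −h·M_{k+1}·L_k^{−1}·v_k = −h·Λ²·Σ_{i=k+1}^{N} v_i; that is, the feedback control u*_k = −h·M_{k+1}·L_k^{−1}·v_k of the unconstrained linear-quadratic dynamic game coincides with h·ξ^k where ξ^k = −Λ²·Σ_{i=k+1}^{N}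 v_i. -/
/-- In the scalar unconstrained linear-quadratic dynamic game, the Riccati feedback
control `u*_k = −h·M_{k+1}·L_k⁻¹·v_k` coincides with `h·ξ^k`, where
`ξ^k = −Λ²·Σ_{i=k+1}^{N} v_i`. -/
theorem stmt_15 (N : ℕ) (hN : 1 ≤ N) (h Λ μ : ℝ) (hμ : μ ≠ 0)
    (M L : ℕ → ℝ)
    (hMN : M N = Λ ^ 2)
    (hL : ∀ k < N, L k = 1 + h ^ 2 * M (k + 1) * (1 - (μ ^ 2)⁻¹))
    (hM : ∀ k < N, M k = Λ ^ 2 + M (k + 1) * (L k)⁻¹)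
    (hLne : ∀ k < N, L k ≠ 0)
    (v : ℕ → ℝ)
    (hv : ∀ k < N, v (k + 1) = (L k)⁻¹ * v k) :
    ∀ k < N, -h * M (k + 1) * (L k)⁻¹ * v k = -h * Λ ^ 2 * ∑ i ∈ Finset.Icc (k + 1) N, v i := by
  have key : ∀ d : ℕ, ∀ k : ℕ, k + d = N →
      M k * v k = Λ ^ 2 * ∑ i ∈ Finset.Icc k N, v i := by
    intro d
    induction d with
    | zero =>
      intro k hk
      simp at hk
      subst hk
      simp [hMN]
    | succ d ih =>
      intro k hk
      have hkN : k < N := by omega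
      have ih' : M (k + 1) * v (k + 1) = Λ ^ 2 * ∑ i ∈ Finset.Icc (k + 1) N, v i :=
        ih (k + 1) (by omega)
      have hsplit : Finset.Icc k N = insert k (Finset.Icc (k + 1) N) := by
        rw [Finset.Icc_add_one_left_eq_Ioc, Finset.Ioc_insert_left (by omega)]
      rw [hM k hkN, hsplit, Finset.sum_insert (by simp)]
      rw [hv k hkN] at ih'
      ring_nf
      ring_nf at ih'
      linarith [ih']
  intro k hk
  have := key (N - (k + 1)) (k + 1) (by omega)
  rw [hv k hk] at this
  calc -h * M (k + 1) * (L k)⁻¹ * v k = -h * (M (k + 1) * ((L k)⁻¹ * v k)) := by ring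
    _ = -h * (Λ ^ 2 * ∑ i ∈ Finset.Icc (k + 1) N, v i) := by rw [this]
    _ = -h * Λ ^ 2 * ∑ i ∈ Finset.Icc (k + 1) N, v i := by ring
end
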